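/- For n ≥ 3 and a pair (a,b) ∈ V_{2^n−2,2}, one has ℋ_n(a,b) = 0 if and only if b ∈ ℍ_a^⊥; hence the complex Stiefel manifold W_{2^{n−1}−1,2} of ℋ_n-orthonormal 2-frames in Ã_n equals {(a,b) ∈ V_{2^n−2,2} : b ∈ ℍ_a^⊥}. -/
import Mathlib


noncomputable section

/-- The Cayley–Dickson algebra `A n` of dimension `2^n` over `ℝ`:
`A 0 = ℝ` and `A (n+1) = A n × A n`. -/
def CD : ℕ → Type
  | 0 => ℝ
  | n + 1 => CD n × CD n

namespace CD

instance instAddCommGroup : (n : ℕ) → AddCommGroup (CD n)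
  | 0 => inferInstanceAs (AddCommGroup ℝ)
  | n + 1 =>
    letI := instAddCommGroup n
    inferInstanceAs (AddCommGroup (CD n × CD n))

instance instModule : (n : ℕ) → Module ℝ (CD n)
  | 0 => inferInstanceAs (Module ℝ ℝ)
  | n + 1 =>
    letI := instAddCommGroup n
    letI := instModule n
    inferInstanceAs (Module ℝ (CD n × CD n))

/-- Conjugation: `x̄ = x` on `ℝ` and `(x₁,x₂)‾ = (x̄₁, -x₂)`. -/
protected def conj : {n : ℕ} → CD n → CD n
  | 0, x => x
  | _ + 1, x => (CD.conj x.1, -x.2)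

/-- Cayley–Dickson multiplication: `(a,b)(x,y) = (ax - ȳb, ya + bx̄)`. -/
protected def mul : {n : ℕ} → CD n → CD n → CD n
  | 0, x, y => (show ℝ from x) * (show ℝ from y)
  | _ + 1, x, y =>
    (CD.mul x.1 y.1 - CD.mul (CD.conj y.2) x.2,
     CD.mul y.2 x.1 + CD.mul x.2 (CD.conj y.1))

instance instMul (n : ℕ) : Mul (CD n) := ⟨CD.mul⟩

/-- The multiplicative unit `e₀` of `A n`. -/
def e0 : (n : ℕ) → CD n
  | 0 => (1 : ℝ)
  | n + 1 => (e0 n, 0)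

/-- The element `ẽ₀ = (0, e₀)` of `A n` (junk value `0` for `n = 0`). -/
def te0 : (n : ℕ) → CD n
  | 0 => 0
  | n + 1 => (0, e0 n)

/-- The "complexification" `α̃ = (-b, a)` of `α = (a,b)` (junk value `0` for `n = 0`);
note `α̃ = α·ẽ₀`. -/
def tilde : {n : ℕ} → CD n → CD n
  | 0, _ => 0
  | _ + 1, x => (-x.2, x.1)

/-- The standard inner product on `A n ≅ ℝ^{2^n}`. -/
protected def inner : {n : ℕ} → CD n → CD n → ℝ
  | 0, x, y => (show ℝ from x) * (show ℝ from y)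
  | _ + 1, x, y => CD.inner x.1 y.1 + CD.inner x.2 y.2

/-- The euclidean norm on `A n`. -/
protected def norm {n : ℕ} (x : CD n) : ℝ := Real.sqrt (CD.inner x x)

/-- `x` is pure if its trace `t(x) = x + x̄` vanishes. -/
def IsPure {n : ℕ} (x : CD n) : Prop := x + CD.conj x = 0

/-- `x = (a,b)` is doubly pure if both `a` and `b` are pure
(equivalently, both `x` and `x̃` are pure). -/
def IsDoublyPure : {n : ℕ} → CD n → Prop
  | 0, x => x = 0
  | _ + 1, x => IsPure x.1 ∧ IsPure x.2

/-- The associator `(x,y,z) = (xy)z - x(yz)`. -/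
def assoc {n : ℕ} (x y z : CD n) : CD n := (x * y) * z - x * (y * z)

/-- The subspace `ℍ_a`: the real span of `{e₀, ã, a, ẽ₀}`. -/
def Ha {n : ℕ} (a : CD n) : Submodule ℝ (CD n) :=
  Submodule.span ℝ {e0 n, tilde a, a, te0 n}

/-- The orthogonal complement `ℍ_a^⊥` of `ℍ_a` in `A n`. -/
def HaPerp {n : ℕ} (a : CD n) : Set (CD n) :=
  {x | ∀ y ∈ Ha a, CD.inner x y = 0}

/-- The element `ε = (ẽ₀, 0)` of `A (n+1)`. -/
def eps (n : ℕ) : CD (n + 1) := (te0 n, 0)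

/-- `α̂ = (b,a)` for `α = (a,b) ∈ A (n+1)`. -/
def hat {n : ℕ} (x : CD (n + 1)) : CD (n + 1) := (x.2, x.1)

/-- The element `(a, b)` of `A (n+1) = A n × A n`. -/
def pair {n : ℕ} (a b : CD n) : CD (n + 1) := (a, b)

end CD

/-- The Hermitian form `ℋ_n(a,b) = 2⟨a,b⟩ - 2i⟨ã,b⟩` on the doubly pure part of `A n`. -/
def Herm {n : ℕ} (a b : CD n) : ℂ :=
  ((2 * CD.inner a b : ℝ) : ℂ) - ((2 * CD.inner (CD.tilde a) b : ℝ) : ℂ) * Complex.I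

/-- The real Stiefel manifold `V_{2^n-2,2}`: orthonormal pairs of doubly pure
elements of `A n`. -/
def V2 (n : ℕ) : Set (CD n × CD n) :=
  {p | CD.IsDoublyPure p.1 ∧ CD.IsDoublyPure p.2 ∧
    CD.norm p.1 = 1 ∧ CD.norm p.2 = 1 ∧ CD.inner p.1 p.2 = 0}

/-- The complex Stiefel manifold `W_{2^{n-1}-1,2}`: `ℋ_n`-orthonormal 2-frames
in `Ã_n`. -/
def W (n : ℕ) : Set (CD n × CD n) := {p ∈ V2 n | Herm p.1 p.2 = 0}


namespace CDAux

open CD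

lemma inner_comm : ∀ {n : ℕ} (x y : CD n), CD.inner x y = CD.inner y x
  | 0, x, y => mul_comm (show ℝ from x) y
  | n + 1, x, y => by
    show CD.inner x.1 y.1 + CD.inner x.2 y.2 = CD.inner y.1 x.1 + CD.inner y.2 x.2
    rw [inner_comm x.1 y.1, inner_comm x.2 y.2]

lemma inner_add_right : ∀ {n : ℕ} (x y z : CD n),
    CD.inner x (y + z) = CD.inner x y + CD.inner x z
  | 0, x, y, z => mul_add (show ℝ from x) y z
  | n + 1, x, y, z => by
    show CD.inner x.1 (y.1 + z.1) + CD.inner x.2 (y.2 + z.2) = _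
    rw [inner_add_right x.1 y.1 z.1, inner_add_right x.2 y.2 z.2]
    show _ = (CD.inner x.1 y.1 + CD.inner x.2 y.2) + (CD.inner x.1 z.1 + CD.inner x.2 z.2)
    ring

lemma inner_smul_right : ∀ {n : ℕ} (r : ℝ) (x y : CD n),
    CD.inner x (r • y) = r * CD.inner x y
  | 0, r, x, y => by
    have hy : (show ℝ from r • y) = r * (show ℝ from y) := rfl
    show (show ℝ from x) * (show ℝ from r • y) = r * ((show ℝ from x) * (show ℝ from y))
    rw [hy]; ring
  | n + 1, r, x, y => by
    show CD.inner x.1 (r • y.1) + CD.inner x.2 (r • y.2) = _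
    rw [inner_smul_right r x.1 y.1, inner_smul_right r x.2 y.2]
    show _ = r * (CD.inner x.1 y.1 + CD.inner x.2 y.2)
    ring

lemma inner_zero_right : ∀ {n : ℕ} (x : CD n), CD.inner x (0 : CD n) = 0
  | 0, x => mul_zero _
  | n + 1, x => by
    show CD.inner x.1 0 + CD.inner x.2 0 = 0
    rw [inner_zero_right x.1, inner_zero_right x.2, add_zero]

lemma pure_inner_e0 : ∀ {n : ℕ} (x : CD n), IsPure x → CD.inner x (e0 n) = 0
  | 0, x, hx => by
    have h : (show ℝ from x) + (show ℝ from x) = 0 := hx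
    have hz : (show ℝ from x) = 0 := by linarith
    show (show ℝ from x) * 1 = 0
    rw [hz, zero_mul]
  | n + 1, x, hx => by
    have h1 : x.1 + CD.conj x.1 = 0 := congrArg Prod.fst hx
    show CD.inner x.1 (e0 n) + CD.inner x.2 0 = 0
    rw [pure_inner_e0 x.1 h1, inner_zero_right, add_zero]

end CDAux

/-- For `n ≥ 3` and `(a,b) ∈ V_{2^n-2,2}`: `ℋ_n(a,b) = 0 ↔ b ∈ ℍ_a^⊥`;
hence `W_{2^{n-1}-1,2} = {(a,b) ∈ V_{2^n-2,2} : b ∈ ℍ_a^⊥}`. -/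
theorem statement7 (n : ℕ) (hn : 3 ≤ n) :
    (∀ p ∈ V2 n, Herm p.1 p.2 = 0 ↔ p.2 ∈ CD.HaPerp p.1) ∧
    W n = {p ∈ V2 n | p.2 ∈ CD.HaPerp p.1} := by
  classical
  obtain ⟨m, rfl⟩ : ∃ m, n = m + 1 := ⟨n - 1, by omega⟩
  have key : ∀ p ∈ V2 (m+1), Herm p.1 p.2 = 0 ↔ p.2 ∈ CD.HaPerp p.1 := by
    rintro ⟨a, b⟩ ⟨hda, hdb, hna, hnb, hab⟩
    simp only at hda hdb hab ⊢
    have hba : CD.inner b a = 0 := by rw [CDAux.inner_comm]; exact hab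
    have hbe : CD.inner b (CD.e0 (m+1)) = 0 := by
      show CD.inner b.1 (CD.e0 m) + CD.inner b.2 0 = 0
      rw [CDAux.pure_inner_e0 b.1 hdb.1, CDAux.inner_zero_right, add_zero]
    have hbt : CD.inner b (CD.te0 (m+1)) = 0 := by
      show CD.inner b.1 0 + CD.inner b.2 (CD.e0 m) = 0
      rw [CDAux.pure_inner_e0 b.2 hdb.2, CDAux.inner_zero_right, zero_add]
    have hherm : Herm a b = 0 ↔ CD.inner (CD.tilde a) b = 0 := by
      unfold Herm
      rw [hab]
      constructor
      · intro h
        have := congrArg Complex.im h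
        simp at this
        linarith
      · intro h; rw [h]; simp
    rw [hherm]
    constructor
    · intro h
      intro y hy
      induction hy using Submodule.span_induction with
      | mem y hy =>
        rcases hy with rfl | rfl | rfl | rfl
        · exact hbe
        · rw [CDAux.inner_comm]; exact h
        · exact hba
        · exact hbt
      | zero => exact CDAux.inner_zero_right b
      | add y z _ _ hy hz => rw [CDAux.inner_add_right, hy, hz, add_zero]
      | smul r y _ hy => rw [CDAux.inner_smul_right, hy, mul_zero]
    · intro h
      have : CD.inner b (CD.tilde a) = 0 :=
        h _ (Submodule.subset_span (by simp))
      rw [CDAux.inner_comm]; exact this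
  refine ⟨key, ?_⟩
  ext p
  simp only [W, Set.mem_setOf_eq]
  exact and_congr_right fun hp => key p hp
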